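/- If S is a closed surreal substructure, then the class S^{⧸ω} of fixed points of Ξ_S is itself a closed surreal substructure, and its parametrisation Ξ_S^ω satisfies: Ξ_S^ω(z) = sup_⊑ Ξ_S^ω(z_⊏) when z is a limit number, and Ξ_S^ω(u ∔ σ) = sup_⊑ { Ξ_S^n(Ξ_S^ω(u) ∔ σ) : n ∈ ℕ } for any number u and sign σ ∈ {−1,+1}. -/

import Mathlib

open Ordinal

attribute [local instance] Classical.propDecidable

/-- A surreal number presented as a sign sequence: a map from an ordinal (its
length) to `{-1, +1}`, extended by `0` beyond its length. -/
structure SSurreal : Type 1 where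
  length : Ordinal.{0}
  sign : Ordinal → ℤ
  sign_mem : ∀ α, α < length → sign α = 1 ∨ sign α = -1
  sign_zero : ∀ α, ¬ α < length → sign α = 0

namespace SSurreal

/-- Simplicity: `x ⊑ y`, i.e. `x` is an initial segment of `y`. -/
def sle (x y : SSurreal) : Prop := ∀ α, α < x.length → x.sign α = y.sign α

/-- Strict simplicity `x ⊏ y`. -/
def slt (x y : SSurreal) : Prop := sle x y ∧ x ≠ y

/-- The (lexicographic, Conway) order on sign sequences. -/
def lt (x y : SSurreal) : Prop :=
  ∃ α, (∀ β, β < α → x.sign β = y.sign β) ∧ x.sign α < y.sign α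

/-- The empty sign sequence, i.e. the surreal number `0`. -/
noncomputable def zero : SSurreal :=
  ⟨0, fun _ => 0, fun α h => absurd h (by simp), fun _ _ => rfl⟩

/-- The ordinal `o` viewed as the constant `+1` sign sequence of length `o`. -/
noncomputable def ofOrdinal (o : Ordinal) : SSurreal :=
  ⟨o, fun α => if α < o then 1 else 0, fun α h => Or.inl (if_pos h), fun α h => if_neg h⟩

/-- The surreal number `1`. -/
noncomputable def one : SSurreal := ofOrdinal 1

/-- The surreal number `-1`. -/
noncomputable def negOne : SSurreal :=
  ⟨1, fun α => if α < 1 then -1 else 0, fun α h => Or.inr (if_pos h), fun α h => if_neg h⟩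

/-- Negation: flip every sign. -/
noncomputable def neg (x : SSurreal) : SSurreal :=
  ⟨x.length, fun α => - x.sign α,
    fun α h => by rcases x.sign_mem α h with h' | h' <;> simp [h'],
    fun α h => by simp [x.sign_zero α h]⟩

/-- Concatenation `x ∔ y` of sign sequences. -/
noncomputable def concat (x y : SSurreal) : SSurreal where
  length := x.length + y.length
  sign α := if α < x.length then x.sign α else y.sign (α - x.length)
  sign_mem := by
    intro α h
    by_cases hx : α < x.length
    · rw [if_pos hx]; exact x.sign_mem α hx
    · rw [if_neg hx]
      refine y.sign_mem _ ?_
      have hle : x.length ≤ α := not_lt.mp hx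
      have := Ordinal.sub_lt_of_le hle (c := y.length)
      exact this.mpr h
  sign_zero := by
    intro α h
    have hx : ¬ α < x.length := fun hx =>
      h (hx.trans_le le_self_add)
    rw [if_neg hx]
    refine y.sign_zero _ ?_
    intro hy
    exact h ((Ordinal.sub_lt_of_le (not_lt.mp hx)).mp hy)

/-- The concatenation product `x ⨰ y` of sign sequences. -/
noncomputable def mul (x y : SSurreal) : SSurreal where
  length := x.length * y.length
  sign γ := if γ < x.length * y.length then y.sign (γ / x.length) * x.sign (γ % x.length) else 0
  sign_mem := by
    intro γ h
    rw [if_pos h]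
    have hx0 : x.length ≠ 0 := by
      intro h0; rw [h0, zero_mul] at h; exact absurd h (by simp)
    have h1 : γ / x.length < y.length := by
      rwa [Ordinal.div_lt hx0]
    have h2 : γ % x.length < x.length := Ordinal.mod_lt γ hx0
    rcases y.sign_mem _ h1 with hy | hy <;> rcases x.sign_mem _ h2 with hx | hx <;>
      simp [hy, hx]
  sign_zero := fun γ h => if_neg h

/-- `s` is the supremum of `C` with respect to simplicity. -/
def IsSimpSup (C : Set SSurreal) (s : SSurreal) : Prop :=
  (∀ x ∈ C, sle x s) ∧ ∀ t, (∀ x ∈ C, sle x t) → sle s t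

/-- The supremum of a ⊏-chain of sign sequences (their union), when it
exists; junk value `zero` otherwise. -/
noncomputable def chainSup (C : Set SSurreal) : SSurreal :=
  if h : ∃ s, IsSimpSup C s then h.choose else zero

/-- Transfinite concatenation `[α, f] = ∔_{γ<α} f(γ)`. -/
noncomputable def concatSum (α : Ordinal) (f : Ordinal → SSurreal) : SSurreal :=
  Ordinal.limitRecOn α zero (fun β ih => concat ih (f β))
    (fun γ _ ih => chainSup (Set.range fun p : Set.Iio γ => ih p.1 p.2))

/-- Restriction of `z` to an initial segment of length (at most) `β`. -/
noncomputable def trunc (z : SSurreal) (β : Ordinal) : SSurreal where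
  length := min β z.length
  sign α := if α < min β z.length then z.sign α else 0
  sign_mem := fun α h => by
    rw [if_pos h]; exact z.sign_mem α (h.trans_le (min_le_right _ _))
  sign_zero := fun α h => if_neg h

/-- The number of `+1` signs occurring in `s` strictly below `γ`. -/
noncomputable def countPlus (s : Ordinal → ℤ) (γ : Ordinal) : Ordinal :=
  Ordinal.limitRecOn γ 0 (fun β ih => if s β = 1 then ih + 1 else ih)
    (fun γ' _ ih => ⨆ β : Set.Iio γ', ih β.1 β.2)

/-- `τ_u`: the ordinal number of `+1` signs in the sign sequence of `u`. -/
noncomputable def tau (u : SSurreal) : Ordinal := countPlus u.sign u.length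

end SSurreal

namespace SSurreal

/-- `Ξ` is the parametrisation of the surreal substructure `S`: a
`(<, ⊏)`-isomorphism from `No` onto `S`. -/
def IsSubstructurePar (S : Set SSurreal) (Ξ : SSurreal → SSurreal) : Prop :=
  (∀ z, Ξ z ∈ S) ∧ (∀ y ∈ S, ∃ z, Ξ z = y) ∧
  (∀ z w, lt z w ↔ lt (Ξ z) (Ξ w)) ∧ (∀ z w, slt z w ↔ slt (Ξ z) (Ξ w))

/-- The parametrisation `Ξ` is closed: it commutes with simplicity-suprema of
nonempty ⊏-chains. -/
def IsClosedPar (Ξ : SSurreal → SSurreal) : Prop :=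
  ∀ C : Set SSurreal, C.Nonempty → IsChain slt C →
    ∀ s, IsSimpSup C s → IsSimpSup (Ξ '' C) (Ξ s)

end SSurreal

/-!
`Ξ^ω` is built by transfinite recursion along the sign sequence: `Ξ^ω (u ∔ σ)` is the
`⊑`-supremum of the `Ξ`-iterates of `x = Ξ^ω u ∔ σ`, and at lengths zero or limit one iterates
from the supremum of the earlier values. Since `Ξ` fixes `Ξ^ω u` and preserves both `<` and `⊏`,
`Ξ x` extends `Ξ^ω u` on the same side as `x`, so `x ⊑ Ξ x`; the iterates form a chain and
closedness makes their supremum a fixed point.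

The invariant carrying everything else is that for `u ⊑ z` the sign of `Ξ^ω z` right after
`Ξ^ω u` is the sign of `z` right after `u`. Both orders are read off the first difference, so
`Ξ^ω` preserves and reflects them. Every fixed point `y` is reached: the supremum `s` of
`{z | Ξ^ω z ⊑ y}` has `Ξ^ω s ⊑ y` by closedness, and if this were strict, `s` followed by the
next sign of `y` would still belong to the set.
-/

namespace SSurreal

local infix:50 " ⊑ " => sle
local infix:50 " ⊏ " => slt

theorem sign_ne_zero_iff (x : SSurreal) {α : Ordinal} : x.sign α ≠ 0 ↔ α < x.length := by
  refine ⟨fun h => by_contra fun h' => h (x.sign_zero α h'), fun h => ?_⟩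
  rcases x.sign_mem α h with h' | h' <;> simp [h']

theorem sign_length (x : SSurreal) : x.sign x.length = 0 :=
  x.sign_zero _ (lt_irrefl _)

theorem length_le_of_sign_eq_zero {x : SSurreal} {α : Ordinal} (h : x.sign α = 0) :
    x.length ≤ α :=
  not_lt.mp fun hα => x.sign_ne_zero_iff.mpr hα h

theorem ext_sign {x y : SSurreal} (h : ∀ α, x.sign α = y.sign α) : x = y := by
  have hl : x.length = y.length := le_antisymm
    (length_le_of_sign_eq_zero (by rw [h]; exact y.sign_length))
    (length_le_of_sign_eq_zero (by rw [← h]; exact x.sign_length))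
  cases x; cases y
  simp only [SSurreal.mk.injEq]
  exact ⟨hl, funext h⟩

/-! ### Simplicity -/

theorem sle_refl (x : SSurreal) : x ⊑ x := fun _ _ => rfl

theorem sle.length_le {x y : SSurreal} (h : x ⊑ y) : x.length ≤ y.length :=
  not_lt.mp fun hlt => x.sign_ne_zero_iff.mpr hlt (by rw [h _ hlt]; exact y.sign_length)

theorem sle_trans {x y z : SSurreal} (hxy : x ⊑ y) (hyz : y ⊑ z) : x ⊑ z := fun α hα => by
  rw [hxy α hα, hyz α (hα.trans_le hxy.length_le)]

theorem eq_of_sle_of_length_le {x y : SSurreal} (h : x ⊑ y) (hl : y.length ≤ x.length) :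
    x = y := by
  refine ext_sign fun α => ?_
  by_cases hα : α < x.length
  · exact h α hα
  · rw [x.sign_zero α hα, y.sign_zero α fun hy => hα (hy.trans_le hl)]

theorem sle_antisymm {x y : SSurreal} (hxy : x ⊑ y) (hyx : y ⊑ x) : x = y :=
  eq_of_sle_of_length_le hxy hyx.length_le

theorem sle_of_sle_of_length_le {x y z : SSurreal} (hx : x ⊑ z) (hy : y ⊑ z)
    (hl : x.length ≤ y.length) : x ⊑ y := fun α hα => by
  rw [hx α hα, hy α (hα.trans_le hl)]

theorem sle_total_of_sle {x y z : SSurreal} (hx : x ⊑ z) (hy : y ⊑ z) : x ⊑ y ∨ y ⊑ x :=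
  (le_total x.length y.length).imp (sle_of_sle_of_length_le hx hy)
    (sle_of_sle_of_length_le hy hx)

theorem sle.eq_or_slt {x y : SSurreal} (h : x ⊑ y) : x = y ∨ x ⊏ y :=
  or_iff_not_imp_left.mpr fun hne => ⟨h, hne⟩

theorem slt.length_lt {x y : SSurreal} (h : x ⊏ y) : x.length < y.length :=
  lt_of_le_of_ne h.1.length_le fun hl => h.2 (eq_of_sle_of_length_le h.1 hl.ge)

theorem slt_of_sle_of_length_lt {x y : SSurreal} (h : x ⊑ y) (hl : x.length < y.length) :
    x ⊏ y :=
  ⟨h, by rintro rfl; exact lt_irrefl _ hl⟩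

theorem slt_of_sle_of_slt {x y z : SSurreal} (hxy : x ⊑ y) (hyz : y ⊏ z) : x ⊏ z :=
  slt_of_sle_of_length_lt (sle_trans hxy hyz.1) (hxy.length_le.trans_lt hyz.length_lt)

theorem slt_of_slt_of_sle {x y z : SSurreal} (hxy : x ⊏ y) (hyz : y ⊑ z) : x ⊏ z :=
  slt_of_sle_of_length_lt (sle_trans hxy.1 hyz) (hxy.length_lt.trans_le hyz.length_le)

theorem isChain_slt_of_isChain_sle {C : Set SSurreal} (h : IsChain sle C) : IsChain slt C :=
  fun _ hx _ hy hne => (h hx hy hne).imp (⟨·, hne⟩) (⟨·, hne.symm⟩)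

theorem map_sle_of_map_slt {f : SSurreal → SSurreal} (hf : ∀ x y, x ⊏ y → f x ⊏ f y)
    {x y : SSurreal} (h : x ⊑ y) : f x ⊑ f y :=
  h.eq_or_slt.elim (fun h => h ▸ sle_refl _) fun h => (hf x y h).1

theorem isChain_range_of_sle {ι : Type*} [LinearOrder ι] (f : ι → SSurreal)
    (hf : ∀ i j, i ≤ j → f i ⊑ f j) : IsChain sle (Set.range f) := by
  rintro _ ⟨i, rfl⟩ _ ⟨j, rfl⟩ -
  exact (le_total i j).imp (hf i j) (hf j i)

/-! ### Truncation -/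

theorem trunc_length_of_le {z : SSurreal} {β : Ordinal} (h : β ≤ z.length) :
    (trunc z β).length = β :=
  min_eq_left h

theorem trunc_sle (z : SSurreal) (β : Ordinal) : trunc z β ⊑ z := fun _ h => if_pos h

theorem trunc_eq_of_sle {w z : SSurreal} (h : w ⊑ z) : trunc z w.length = w :=
  eq_of_sle_of_length_le (sle_of_sle_of_length_le (trunc_sle z _) h (min_le_left _ _))
    (trunc_length_of_le h.length_le).ge

theorem trunc_slt {z : SSurreal} {β : Ordinal} (h : β < z.length) : trunc z β ⊏ z :=
  slt_of_sle_of_length_lt (trunc_sle z β) (by rwa [trunc_length_of_le h.le])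

theorem sle_trunc {w z : SSurreal} {β : Ordinal} (h : w ⊑ z) (hβ : w.length ≤ β) :
    w ⊑ trunc z β :=
  sle_of_sle_of_length_le h (trunc_sle z β) (le_min hβ h.length_le)

theorem slt_iff_exists_trunc {w z : SSurreal} : w ⊏ z ↔ ∃ β < z.length, trunc z β = w :=
  ⟨fun h => ⟨w.length, h.length_lt, trunc_eq_of_sle h.1⟩, fun ⟨_, hβ, h⟩ => h ▸ trunc_slt hβ⟩

/-! ### The lexicographic order -/

theorem le_length_of_sign_ne {x y : SSurreal} {α : Ordinal}
    (hagree : ∀ β < α, x.sign β = y.sign β) (hne : x.sign α ≠ y.sign α) : α ≤ x.length := by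
  refine not_lt.mp fun hlt => hne ?_
  have hy : y.length ≤ x.length :=
    length_le_of_sign_eq_zero (by rw [← hagree _ hlt]; exact x.sign_length)
  rw [x.sign_zero α (not_lt.mpr hlt.le), y.sign_zero α (not_lt.mpr (hy.trans hlt.le))]

theorem exists_common_prefix_of_agree {x y : SSurreal} {α : Ordinal}
    (hagree : ∀ β < α, x.sign β = y.sign β) (hne : x.sign α ≠ y.sign α) :
    ∃ u, u ⊑ x ∧ u ⊑ y ∧ u.length = α := by
  have hx := le_length_of_sign_ne hagree hne
  have hy := le_length_of_sign_ne (fun β hβ => (hagree β hβ).symm) hne.symm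
  refine ⟨trunc x α, trunc_sle x α, fun β hβ => ?_, trunc_length_of_le hx⟩
  rw [trunc_sle x α β hβ, hagree β (by rwa [trunc_length_of_le hx] at hβ)]

theorem exists_common_prefix_of_ne {x y : SSurreal} (h : x ≠ y) :
    ∃ u, u ⊑ x ∧ u ⊑ y ∧ x.sign u.length ≠ y.sign u.length := by
  have hdiff : ∃ α, x.sign α ≠ y.sign α := by
    by_contra! hall
    exact h (ext_sign hall)
  obtain ⟨α, hα, hmin⟩ := Ordinal.lt_wf.has_min _ hdiff
  obtain ⟨u, hux, huy, rfl⟩ :=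
    exists_common_prefix_of_agree (fun β hβ => not_not.mp (hmin β · hβ)) hα
  exact ⟨u, hux, huy, hα⟩

theorem exists_common_prefix_of_lt {x y : SSurreal} (h : lt x y) :
    ∃ u, u ⊑ x ∧ u ⊑ y ∧ x.sign u.length < y.sign u.length := by
  obtain ⟨α, hagree, hα⟩ := h
  obtain ⟨u, hux, huy, rfl⟩ := exists_common_prefix_of_agree hagree hα.ne
  exact ⟨u, hux, huy, hα⟩

theorem lt_of_common_prefix {u x y : SSurreal} (hx : u ⊑ x) (hy : u ⊑ y)
    (h : x.sign u.length < y.sign u.length) : lt x y :=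
  ⟨u.length, fun β hβ => (hx β hβ).symm.trans (hy β hβ), h⟩

theorem lt.irrefl (x : SSurreal) : ¬ lt x x := fun ⟨_, _, h⟩ => lt_irrefl _ h

theorem lt.asymm {x y : SSurreal} (hxy : lt x y) : ¬ lt y x := fun hyx => by
  obtain ⟨α, hα, hxyα⟩ := hxy
  obtain ⟨γ, hγ, hyxγ⟩ := hyx
  rcases lt_trichotomy α γ with h | rfl | h
  · rw [hγ α h] at hxyα; exact lt_irrefl _ hxyα
  · exact lt_asymm hxyα hyxγ
  · rw [hα γ h] at hyxγ; exact lt_irrefl _ hyxγ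

theorem lt_or_lt_of_ne {x y : SSurreal} (h : x ≠ y) : lt x y ∨ lt y x := by
  obtain ⟨u, hux, huy, hne⟩ := exists_common_prefix_of_ne h
  exact hne.lt_or_gt.imp (lt_of_common_prefix hux huy) (lt_of_common_prefix huy hux)

theorem lt_iff_sign_eq_one {u w : SSurreal} (h : u ⊏ w) : lt u w ↔ w.sign u.length = 1 := by
  refine ⟨fun hlt => (w.sign_mem _ h.length_lt).resolve_right fun hneg => lt.asymm hlt ?_,
    fun hpos => lt_of_common_prefix (sle_refl u) h.1 (by rw [sign_length, hpos]; exact one_pos)⟩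
  exact lt_of_common_prefix h.1 (sle_refl u) (by rw [sign_length, hneg]; exact neg_one_lt_zero)

theorem lt_iff_sign_eq_neg_one {u w : SSurreal} (h : u ⊏ w) :
    lt w u ↔ w.sign u.length = -1 := by
  refine ⟨fun hlt => (w.sign_mem _ h.length_lt).resolve_left fun hpos => lt.asymm hlt ?_,
    fun hneg => lt_of_common_prefix h.1 (sle_refl u)
      (by rw [sign_length, hneg]; exact neg_one_lt_zero)⟩
  exact lt_of_common_prefix (sle_refl u) h.1 (by rw [sign_length, hpos]; exact one_pos)

/-! ### Appending a single sign -/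

noncomputable def ofSign (ε : ℤ) : SSurreal := if ε = 1 then one else negOne

theorem ofSign_one : ofSign 1 = one := if_pos rfl

theorem ofSign_neg_one : ofSign (-1) = negOne := if_neg (by norm_num)

theorem ofSign_length (ε : ℤ) : (ofSign ε).length = 1 := by
  unfold ofSign; split <;> rfl

theorem ofSign_sign_zero {ε : ℤ} (hε : ε = 1 ∨ ε = -1) : (ofSign ε).sign 0 = ε := by
  rcases hε with rfl | rfl <;> simp [ofSign, one, negOne, ofOrdinal]

theorem sle_concat (x y : SSurreal) : x ⊑ concat x y := fun _ h => (if_pos h).symm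

theorem concat_ofSign_length (u : SSurreal) (ε : ℤ) :
    (concat u (ofSign ε)).length = Order.succ u.length := by
  show u.length + (ofSign ε).length = _
  rw [ofSign_length, Order.succ_eq_add_one]

theorem slt_concat_ofSign (u : SSurreal) (ε : ℤ) : u ⊏ concat u (ofSign ε) :=
  slt_of_sle_of_length_lt (sle_concat u _) (by rw [concat_ofSign_length]; exact Order.lt_succ _)

theorem concat_ofSign_sign_length {ε : ℤ} (hε : ε = 1 ∨ ε = -1) (u : SSurreal) :
    (concat u (ofSign ε)).sign u.length = ε := by
  show (if u.length < u.length then _ else _) = ε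
  rw [if_neg (lt_irrefl _), Ordinal.sub_self, ofSign_sign_zero hε]

theorem concat_ofSign_sle {u w : SSurreal} {ε : ℤ} (hε : ε = 1 ∨ ε = -1) (h : u ⊏ w)
    (hs : w.sign u.length = ε) : concat u (ofSign ε) ⊑ w := by
  intro α hα
  rw [concat_ofSign_length, Order.lt_succ_iff] at hα
  rcases hα.lt_or_eq with hα | rfl
  · rw [← sle_concat u _ α hα, h.1 α hα]
  · rw [concat_ofSign_sign_length hε, hs]

/-! ### Suprema for simplicity -/

theorem IsSimpSup.unique {C : Set SSurreal} {s t : SSurreal} (hs : IsSimpSup C s)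
    (ht : IsSimpSup C t) : s = t :=
  sle_antisymm (hs.2 t ht.1) (ht.2 s hs.1)

theorem chainSup_eq {C : Set SSurreal} {s : SSurreal} (hs : IsSimpSup C s) :
    chainSup C = s := by
  have hex : ∃ s, IsSimpSup C s := ⟨s, hs⟩
  rw [chainSup, dif_pos hex]
  exact hex.choose_spec.unique hs

/-- The supremum of a chain is the union of its members: the sign at `α` is read off any
member longer than `α`. -/
theorem exists_isSimpSup {C : Set SSurreal} (hC : IsChain sle C)
    (hbdd : BddAbove (length '' C)) : ∃ s, IsSimpSup C s := by
  have hlong : ∀ {α}, α < sSup (length '' C) → ∃ x ∈ C, α < x.length := fun hα => by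
    obtain ⟨_, ⟨x, hx, rfl⟩, hlt⟩ := exists_lt_of_lt_csSup' hα
    exact ⟨x, hx, hlt⟩
  have hsign : ∀ {x y α}, x ∈ C → y ∈ C → α < x.length → α < y.length →
      x.sign α = y.sign α := by
    intro x y α hx hy hαx hαy
    rcases eq_or_ne x y with rfl | hne
    · rfl
    rcases hC hx hy hne with h | h
    · exact h _ hαx
    · exact (h _ hαy).symm
  refine ⟨⟨sSup (length '' C),
    fun α => if h : ∃ x ∈ C, α < x.length then h.choose.sign α else 0, fun α hα => ?_,
    fun α hα => dif_neg ?_⟩, fun x hx α hα => ?_, fun t ht α hα => ?_⟩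
  · simp only [dif_pos (hlong hα)]
    exact (hlong hα).choose.sign_mem α (hlong hα).choose_spec.2
  · rintro ⟨x, hx, hαx⟩
    exact hα (hαx.trans_le (le_csSup hbdd ⟨x, hx, rfl⟩))
  · have h : ∃ x ∈ C, α < x.length := ⟨x, hx, hα⟩
    obtain ⟨hyC, hαy⟩ := h.choose_spec
    simp only [dif_pos h]
    exact hsign hx hyC hα hαy
  · obtain ⟨hxC, hαx⟩ := (hlong hα).choose_spec
    simp only [dif_pos (hlong hα)]
    exact ht _ hxC α hαx

theorem isSimpSup_chainSup {C : Set SSurreal} (hC : IsChain sle C)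
    (hbdd : BddAbove (length '' C)) : IsSimpSup C (chainSup C) := by
  obtain ⟨s, hs⟩ := exists_isSimpSup hC hbdd
  exact (chainSup_eq hs).symm ▸ hs

theorem bddAbove_length_range {ι : Type*} [Small.{0} ι] (f : ι → SSurreal) :
    BddAbove (length '' Set.range f) := by
  rw [← Set.range_comp]
  exact Ordinal.bddAbove_of_small

theorem IsSimpSup.exists_length_gt {C : Set SSurreal} {s : SSurreal} (hs : IsSimpSup C s)
    {β : Ordinal} (hβ : β < s.length) : ∃ c ∈ C, β < c.length := by
  by_contra! hshort
  have hbound : ∀ c ∈ C, c ⊑ trunc s β := fun c hc => sle_trunc (hs.1 c hc) (hshort c hc)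
  exact (hs.2 _ hbound).length_le.not_gt (by rwa [trunc_length_of_le hβ.le])

theorem IsSimpSup.exists_sle_of_slt {C : Set SSurreal} {s w : SSurreal} (hs : IsSimpSup C s)
    (hw : w ⊏ s) : ∃ c ∈ C, w ⊑ c := by
  obtain ⟨c, hc, hlt⟩ := hs.exists_length_gt hw.length_lt
  exact ⟨c, hc, sle_of_sle_of_length_le hw.1 (hs.1 c hc) hlt.le⟩

theorem IsSimpSup.isSuccLimit_length {C : Set SSurreal} {s : SSurreal} (hs : IsSimpSup C s)
    (hne : C.Nonempty) (hsC : s ∉ C) : Order.IsSuccLimit s.length := by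
  have hcs : ∀ c ∈ C, c ⊏ s := fun c hc => ⟨hs.1 c hc, by rintro rfl; exact hsC hc⟩
  obtain ⟨c, hc⟩ := hne
  refine Ordinal.isSuccLimit_iff.mpr ⟨(hcs c hc).length_lt.ne_bot, ?_⟩
  refine Order.isSuccPrelimit_of_succ_lt fun β hβ => ?_
  obtain ⟨d, hd, hβd⟩ := hs.exists_length_gt hβ
  exact (Order.succ_le_of_lt hβd).trans_lt (hcs d hd).length_lt

/-! ### Iterating a simplicity-preserving map -/

/-- `sup_⊑ {Ξⁿ x : n ∈ ℕ}`; a genuine supremum when `x ⊑ Ξ x`. -/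
noncomputable def iterSup (Ξ : SSurreal → SSurreal) (x : SSurreal) : SSurreal :=
  chainSup (Set.range fun n : ℕ => Ξ^[n] x)

section Iterate

variable {Ξ : SSurreal → SSurreal} (hslt : ∀ x y, x ⊏ y → Ξ x ⊏ Ξ y)
include hslt

theorem iterate_sle_iterate_of_sle {x y : SSurreal} (h : x ⊑ y) (n : ℕ) :
    Ξ^[n] x ⊑ Ξ^[n] y := by
  induction n with
  | zero => exact h
  | succ n ih =>
    rw [Function.iterate_succ_apply', Function.iterate_succ_apply']
    exact map_sle_of_map_slt hslt ih

theorem iterate_sle_iterate {x : SSurreal} (hx : x ⊑ Ξ x) {m n : ℕ} (h : m ≤ n) :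
    Ξ^[m] x ⊑ Ξ^[n] x := by
  induction n, h using Nat.le_induction with
  | base => exact sle_refl _
  | succ n _ ih =>
    refine sle_trans ih ?_
    rw [Function.iterate_succ_apply]
    exact iterate_sle_iterate_of_sle hslt hx n

theorem isChain_range_iterate {x : SSurreal} (hx : x ⊑ Ξ x) :
    IsChain sle (Set.range fun n : ℕ => Ξ^[n] x) :=
  isChain_range_of_sle _ fun _ _ => iterate_sle_iterate hslt hx

theorem isSimpSup_iterSup {x : SSurreal} (hx : x ⊑ Ξ x) :
    IsSimpSup (Set.range fun n : ℕ => Ξ^[n] x) (iterSup Ξ x) :=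
  isSimpSup_chainSup (isChain_range_iterate hslt hx) (bddAbove_length_range _)

theorem sle_iterSup {x : SSurreal} (hx : x ⊑ Ξ x) : x ⊑ iterSup Ξ x :=
  (isSimpSup_iterSup hslt hx).1 x ⟨0, rfl⟩

theorem iterSup_sle_of_map_eq {x y : SSurreal} (hx : x ⊑ Ξ x) (hxy : x ⊑ y) (hy : Ξ y = y) :
    iterSup Ξ x ⊑ y := by
  refine (isSimpSup_iterSup hslt hx).2 y ?_
  rintro _ ⟨n, rfl⟩
  simpa only [Function.iterate_fixed hy n] using iterate_sle_iterate_of_sle hslt hxy n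

theorem iterSup_eq_self {x : SSurreal} (hx : Ξ x = x) : iterSup Ξ x = x := by
  have hxΞx : x ⊑ Ξ x := by rw [hx]; exact sle_refl x
  exact sle_antisymm (iterSup_sle_of_map_eq hslt hxΞx (sle_refl x) hx) (sle_iterSup hslt hxΞx)

/-- Closedness applied to the iterates, whose image under `Ξ` is cofinal in them. -/
theorem map_iterSup (hcl : IsClosedPar Ξ) {x : SSurreal} (hx : x ⊑ Ξ x) :
    Ξ (iterSup Ξ x) = iterSup Ξ x := by
  have hsup := isSimpSup_iterSup hslt hx
  have hmap := hcl (Set.range fun n : ℕ => Ξ^[n] x) ⟨x, 0, rfl⟩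
    (isChain_slt_of_isChain_sle (isChain_range_iterate hslt hx)) _ hsup
  refine IsSimpSup.unique ⟨?_, fun t ht => hmap.2 t ?_⟩ hsup
  · rintro _ ⟨n, rfl⟩
    refine sle_trans (iterate_sle_iterate hslt hx n.le_succ) ?_
    rw [Function.iterate_succ_apply']
    exact hmap.1 _ ⟨_, ⟨n, rfl⟩, rfl⟩
  · rintro _ ⟨_, ⟨n, rfl⟩, rfl⟩
    rw [← Function.iterate_succ_apply' Ξ n x]
    exact ht _ ⟨n + 1, rfl⟩

theorem sle_map_of_isSimpSup {C : Set SSurreal} {s : SSurreal} (hs : IsSimpSup C s)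
    (hfix : ∀ c ∈ C, Ξ c = c) : s ⊑ Ξ s :=
  hs.2 _ fun c hc => hfix c hc ▸ map_sle_of_map_slt hslt (hs.1 c hc)

/-- `Ξ` fixes `u` and preserves both orders, so `Ξ (u ∔ ε)` extends `u` on the same side as
`u ∔ ε`. -/
theorem concat_ofSign_sle_map (hlt : ∀ x y, lt x y → lt (Ξ x) (Ξ y)) {u : SSurreal}
    (hu : Ξ u = u) {ε : ℤ} (hε : ε = 1 ∨ ε = -1) :
    concat u (ofSign ε) ⊑ Ξ (concat u (ofSign ε)) := by
  have hux := slt_concat_ofSign u ε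
  have huΞx := hslt _ _ hux
  rw [hu] at huΞx
  refine concat_ofSign_sle hε huΞx ?_
  have hsign := concat_ofSign_sign_length hε u
  rcases hε with rfl | rfl
  · have hlt' := hlt _ _ ((lt_iff_sign_eq_one hux).2 hsign)
    rw [hu] at hlt'
    exact (lt_iff_sign_eq_one huΞx).1 hlt'
  · have hlt' := hlt _ _ ((lt_iff_sign_eq_neg_one hux).2 hsign)
    rw [hu] at hlt'
    exact (lt_iff_sign_eq_neg_one huΞx).1 hlt'

end Iterate

theorem map_eq_self_of_isSimpSup {Ξ : SSurreal → SSurreal} (hcl : IsClosedPar Ξ)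
    {C : Set SSurreal} {s : SSurreal} (hne : C.Nonempty) (hC : IsChain slt C)
    (hfix : ∀ c ∈ C, Ξ c = c) (hs : IsSimpSup C s) : Ξ s = s := by
  have hmap := hcl C hne hC s hs
  rw [Set.image_congr hfix, Set.image_id'] at hmap
  exact hmap.unique hs

/-! ### The parametrisation of the fixed points -/

theorem length_induction {P : SSurreal → Prop}
    (h : ∀ z, (∀ w, w.length < z.length → P w) → P z) (z : SSurreal) : P z :=
  (InvImage.wf length Ordinal.lt_wf).induction z h

theorem zero_sle (x : SSurreal) : zero ⊑ x := fun _ h => absurd h not_lt_zero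

theorem isChain_range_trunc {f : SSurreal → SSurreal} {z : SSurreal}
    (hf : ∀ w v, v ⊏ z → w ⊑ v → f w ⊑ f v) :
    IsChain sle (Set.range fun β : Set.Iio z.length => f (trunc z β)) :=
  isChain_range_of_sle _ fun β γ hβγ =>
    hf _ _ (trunc_slt γ.2) (sle_trunc (trunc_sle z β) ((min_le_left _ _).trans hβγ))

/-- `Ξ^ω z` iterates `Ξ` starting from `Ξ^ω u ∔ σ` when `z = u ∔ σ`, and starting from
`sup_⊑ {Ξ^ω w : w ⊏ z}` when the length of `z` is zero or a limit. -/
noncomputable def omegaPar (Ξ : SSurreal → SSurreal) (z : SSurreal) : SSurreal :=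
  iterSup Ξ <|
    if _ : Order.IsSuccPrelimit z.length then
      chainSup (Set.range fun β : Set.Iio z.length => omegaPar Ξ (trunc z β))
    else
      concat (omegaPar Ξ (trunc z (pred z.length))) (ofSign (z.sign (pred z.length)))
termination_by z.length
decreasing_by
  · exact (min_le_left _ _).trans_lt β.2
  · exact (min_le_left _ _).trans_lt (pred_lt_iff_not_isSuccPrelimit.mpr ‹_›)

section OmegaPar

variable {Ξ : SSurreal → SSurreal}

theorem omegaPar_of_isSuccPrelimit {z : SSurreal} (hz : Order.IsSuccPrelimit z.length) :
    omegaPar Ξ z =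
      iterSup Ξ (chainSup (Set.range fun β : Set.Iio z.length => omegaPar Ξ (trunc z β))) := by
  rw [omegaPar, dif_pos hz]

theorem omegaPar_of_not_isSuccPrelimit {z : SSurreal} (hz : ¬ Order.IsSuccPrelimit z.length) :
    omegaPar Ξ z = iterSup Ξ
      (concat (omegaPar Ξ (trunc z (pred z.length))) (ofSign (z.sign (pred z.length)))) := by
  rw [omegaPar, dif_neg hz]

theorem omegaPar_zero : omegaPar Ξ zero = iterSup Ξ zero := by
  have hempty : IsSimpSup (Set.range fun β : Set.Iio zero.length => omegaPar Ξ (trunc zero β))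
      zero :=
    ⟨fun _ ⟨β, _⟩ => absurd (show (β : Ordinal) < 0 from β.2) not_lt_zero, fun t _ => zero_sle t⟩
  rw [omegaPar_of_isSuccPrelimit Order.isSuccPrelimit_bot, chainSup_eq hempty]

theorem omegaPar_concat_ofSign {ε : ℤ} (hε : ε = 1 ∨ ε = -1) (u : SSurreal) :
    omegaPar Ξ (concat u (ofSign ε)) = iterSup Ξ (concat (omegaPar Ξ u) (ofSign ε)) := by
  have hpred : pred (concat u (ofSign ε)).length = u.length := by
    rw [concat_ofSign_length, Order.succ_eq_add_one, pred_add_one]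
  have hsucc : ¬ Order.IsSuccPrelimit (concat u (ofSign ε)).length := by
    rw [concat_ofSign_length]
    exact Order.not_isSuccPrelimit_succ _
  rw [omegaPar_of_not_isSuccPrelimit hsucc, hpred, trunc_eq_of_sle (sle_concat u _),
    concat_ofSign_sign_length hε]

variable (hslt : ∀ x y, x ⊏ y → Ξ x ⊏ Ξ y) (hlt : ∀ x y, lt x y → lt (Ξ x) (Ξ y))
  (hcl : IsClosedPar Ξ)
include hslt hlt hcl

theorem map_omegaPar_and_omegaPar_slt (z : SSurreal) :
    Ξ (omegaPar Ξ z) = omegaPar Ξ z ∧ ∀ w, w ⊏ z → omegaPar Ξ w ⊏ omegaPar Ξ z := by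
  induction z using length_induction with
  | h z ih =>
  have hmono : ∀ w v, v ⊏ z → w ⊑ v → omegaPar Ξ w ⊑ omegaPar Ξ v := fun w v hv hwv =>
    hwv.eq_or_slt.elim (fun h => h ▸ sle_refl _) fun h => ((ih v hv.length_lt).2 w h).1
  by_cases hz : Order.IsSuccPrelimit z.length
  · have hC := isChain_range_trunc hmono
    have hs := isSimpSup_chainSup hC (bddAbove_length_range _)
    have hseed := sle_map_of_isSimpSup hslt hs (by
      rintro _ ⟨β, rfl⟩
      exact (ih _ ((min_le_left _ _).trans_lt β.2)).1)
    rw [omegaPar_of_isSuccPrelimit hz]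
    refine ⟨map_iterSup hslt hcl hseed, fun w hw => ?_⟩
    have hnext : Order.succ w.length < z.length := hz.succ_lt hw.length_lt
    have hwv : w ⊏ trunc z (Order.succ w.length) :=
      slt_of_sle_of_length_lt (sle_trunc hw.1 (Order.le_succ _))
        (by rw [trunc_length_of_le hnext.le]; exact Order.lt_succ _)
    exact slt_of_slt_of_sle ((ih _ (trunc_slt hnext).length_lt).2 w hwv)
      (sle_trans (hs.1 _ ⟨⟨_, hnext⟩, rfl⟩) (sle_iterSup hslt hseed))
  · have hp : pred z.length < z.length := pred_lt_iff_not_isSuccPrelimit.mpr hz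
    have hu := trunc_slt hp
    have hseed := concat_ofSign_sle_map hslt hlt (ih _ hu.length_lt).1 (z.sign_mem _ hp)
    rw [omegaPar_of_not_isSuccPrelimit hz]
    refine ⟨map_iterSup hslt hcl hseed, fun w hw => ?_⟩
    have hwu : w ⊑ trunc z (pred z.length) := sle_trunc hw.1 (by
      rw [← Order.lt_succ_iff, succ_pred_eq_iff_not_isSuccPrelimit.mpr hz]
      exact hw.length_lt)
    exact slt_of_sle_of_slt (hmono _ _ hu hwu)
      (slt_of_slt_of_sle (slt_concat_ofSign _ _) (sle_iterSup hslt hseed))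

theorem map_omegaPar (z : SSurreal) : Ξ (omegaPar Ξ z) = omegaPar Ξ z :=
  (map_omegaPar_and_omegaPar_slt hslt hlt hcl z).1

theorem omegaPar_slt_omegaPar {w z : SSurreal} (h : w ⊏ z) : omegaPar Ξ w ⊏ omegaPar Ξ z :=
  (map_omegaPar_and_omegaPar_slt hslt hlt hcl z).2 w h

theorem omegaPar_sle_omegaPar {w z : SSurreal} (h : w ⊑ z) : omegaPar Ξ w ⊑ omegaPar Ξ z :=
  map_sle_of_map_slt (fun _ _ => omegaPar_slt_omegaPar hslt hlt hcl) h

theorem isSimpSup_omegaPar_concat_ofSign {ε : ℤ} (hε : ε = 1 ∨ ε = -1) (u : SSurreal) :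
    IsSimpSup (Set.range fun n : ℕ => Ξ^[n] (concat (omegaPar Ξ u) (ofSign ε)))
      (omegaPar Ξ (concat u (ofSign ε))) := by
  rw [omegaPar_concat_ofSign hε]
  exact isSimpSup_iterSup hslt (concat_ofSign_sle_map hslt hlt (map_omegaPar hslt hlt hcl u) hε)

theorem isSimpSup_omegaPar_of_isSuccLimit {z : SSurreal} (hz : Order.IsSuccLimit z.length) :
    IsSimpSup (omegaPar Ξ '' {w | w ⊏ z}) (omegaPar Ξ z) := by
  have hrange : omegaPar Ξ '' {w | w ⊏ z} =
      Set.range fun β : Set.Iio z.length => omegaPar Ξ (trunc z β) := by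
    ext x
    constructor
    · rintro ⟨w, hw, rfl⟩
      obtain ⟨β, hβ, rfl⟩ := slt_iff_exists_trunc.1 hw
      exact ⟨⟨β, hβ⟩, rfl⟩
    · rintro ⟨β, rfl⟩
      exact ⟨_, trunc_slt β.2, rfl⟩
  have hC := isChain_range_trunc (z := z) fun _ _ _ => omegaPar_sle_omegaPar hslt hlt hcl
  have hs := isSimpSup_chainSup hC (bddAbove_length_range _)
  have hne : (Set.range fun β : Set.Iio z.length => omegaPar Ξ (trunc z β)).Nonempty :=
    ⟨_, ⟨0, hz.pos⟩, rfl⟩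
  have hfix : Ξ (chainSup _) = chainSup _ :=
    map_eq_self_of_isSimpSup hcl hne (isChain_slt_of_isChain_sle hC)
      (by rintro _ ⟨β, rfl⟩; exact map_omegaPar hslt hlt hcl _) hs
  rw [hrange, omegaPar_of_isSuccPrelimit hz.isSuccPrelimit, iterSup_eq_self hslt hfix]
  exact hs

/-- `Ξ^ω z` extends `Ξ^ω u ∔ σ` when `z` extends `u ∔ σ`. -/
theorem sign_omegaPar_length {u z : SSurreal} (h : u ⊑ z) :
    (omegaPar Ξ z).sign (omegaPar Ξ u).length = z.sign u.length := by
  rcases h.eq_or_slt with rfl | h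
  · rw [sign_length, sign_length]
  have hε := z.sign_mem _ h.length_lt
  have hprefix : concat (omegaPar Ξ u) (ofSign (z.sign u.length)) ⊑ omegaPar Ξ z :=
    sle_trans ((isSimpSup_omegaPar_concat_ofSign hslt hlt hcl hε u).1 _ ⟨0, rfl⟩)
      (omegaPar_sle_omegaPar hslt hlt hcl (concat_ofSign_sle hε h rfl))
  rw [← hprefix _ (by rw [concat_ofSign_length]; exact Order.lt_succ _),
    concat_ofSign_sign_length hε]

theorem lt_omegaPar_of_lt {z w : SSurreal} (h : lt z w) : lt (omegaPar Ξ z) (omegaPar Ξ w) := by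
  obtain ⟨u, huz, huw, hsign⟩ := exists_common_prefix_of_lt h
  refine lt_of_common_prefix (omegaPar_sle_omegaPar hslt hlt hcl huz)
    (omegaPar_sle_omegaPar hslt hlt hcl huw) ?_
  rwa [sign_omegaPar_length hslt hlt hcl huz, sign_omegaPar_length hslt hlt hcl huw]

theorem sle_of_omegaPar_sle {z w : SSurreal} (h : omegaPar Ξ z ⊑ omegaPar Ξ w) : z ⊑ w := by
  by_contra hzw
  have hne : z ≠ w := by rintro rfl; exact hzw (sle_refl z)
  obtain ⟨u, huz, huw, hsign⟩ := exists_common_prefix_of_ne hne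
  have hlen := (omegaPar_slt_omegaPar hslt hlt hcl ⟨huz, by rintro rfl; exact hzw huw⟩).length_lt
  exact hsign (by rw [← sign_omegaPar_length hslt hlt hcl huz,
    ← sign_omegaPar_length hslt hlt hcl huw, h _ hlen])

theorem slt_iff_omegaPar_slt (z w : SSurreal) : z ⊏ w ↔ omegaPar Ξ z ⊏ omegaPar Ξ w :=
  ⟨omegaPar_slt_omegaPar hslt hlt hcl, fun h =>
    ⟨sle_of_omegaPar_sle hslt hlt hcl h.1, by rintro rfl; exact h.2 rfl⟩⟩

theorem lt_iff_omegaPar_lt (z w : SSurreal) : lt z w ↔ lt (omegaPar Ξ z) (omegaPar Ξ w) := by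
  refine ⟨lt_omegaPar_of_lt hslt hlt hcl, fun h => ?_⟩
  rcases eq_or_ne z w with rfl | hne
  · exact absurd h (lt.irrefl _)
  · exact (lt_or_lt_of_ne hne).resolve_right fun hwz =>
      lt.asymm h (lt_omegaPar_of_lt hslt hlt hcl hwz)

theorem length_le_length_omegaPar (z : SSurreal) : z.length ≤ (omegaPar Ξ z).length := by
  induction z using length_induction with
  | h z ih =>
  refine le_of_forall_lt fun β hβ => ?_
  calc β = (trunc z β).length := (trunc_length_of_le hβ.le).symm
    _ ≤ (omegaPar Ξ (trunc z β)).length := ih _ (trunc_slt hβ).length_lt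
    _ < (omegaPar Ξ z).length := (omegaPar_slt_omegaPar hslt hlt hcl (trunc_slt hβ)).length_lt

theorem isClosedPar_omegaPar : IsClosedPar (omegaPar Ξ) := by
  intro C hne _ s hs
  refine ⟨fun _ ⟨c, hc, hcs⟩ => hcs ▸ omegaPar_sle_omegaPar hslt hlt hcl (hs.1 c hc),
    fun t ht => ?_⟩
  by_cases hsC : s ∈ C
  · exact ht _ ⟨s, hsC, rfl⟩
  refine (isSimpSup_omegaPar_of_isSuccLimit hslt hlt hcl (hs.isSuccLimit_length hne hsC)).2 t ?_
  rintro _ ⟨w, hw, rfl⟩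
  obtain ⟨c, hc, hwc⟩ := hs.exists_sle_of_slt hw
  exact sle_trans (omegaPar_sle_omegaPar hslt hlt hcl hwc) (ht _ ⟨c, hc, rfl⟩)

theorem exists_omegaPar_eq {y : SSurreal} (hy : Ξ y = y) : ∃ z, omegaPar Ξ z = y := by
  set D := {z | omegaPar Ξ z ⊑ y}
  have hD : IsChain sle D := fun a ha b hb _ =>
    (sle_total_of_sle ha hb).imp (sle_of_omegaPar_sle hslt hlt hcl)
      (sle_of_omegaPar_sle hslt hlt hcl)
  have hzero : zero ∈ D := by
    show omegaPar Ξ zero ⊑ y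
    rw [omegaPar_zero]
    exact iterSup_sle_of_map_eq hslt (zero_sle _) (zero_sle y) hy
  have hbdd : BddAbove (length '' D) := ⟨y.length, by
    rintro _ ⟨z, hz, rfl⟩
    exact (length_le_length_omegaPar hslt hlt hcl z).trans hz.length_le⟩
  obtain ⟨s, hs⟩ := exists_isSimpSup hD hbdd
  have hsD : omegaPar Ξ s ⊑ y :=
    (isClosedPar_omegaPar hslt hlt hcl D ⟨zero, hzero⟩ (isChain_slt_of_isChain_sle hD) s hs).2 y
      fun _ ⟨_, hz, hzx⟩ => hzx ▸ hz
  refine ⟨s, by_contra fun hne => ?_⟩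
  have hsy : omegaPar Ξ s ⊏ y := ⟨hsD, hne⟩
  have hε := y.sign_mem _ hsy.length_lt
  have hnext : concat s (ofSign (y.sign (omegaPar Ξ s).length)) ∈ D := by
    show omegaPar Ξ _ ⊑ y
    have hseed := concat_ofSign_sle_map hslt hlt (map_omegaPar hslt hlt hcl s) hε
    rw [omegaPar_concat_ofSign hε]
    exact iterSup_sle_of_map_eq hslt hseed (concat_ofSign_sle hε hsy rfl) hy
  exact (slt_concat_ofSign s _).length_lt.not_ge (hs.1 _ hnext).length_le

end OmegaPar

end SSurreal

open SSurreal in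
/-- if `S` is a closed surreal substructure, the class `S^{⧸ω}`
of fixed points of `Ξ_S` is a closed surreal substructure, and its
parametrisation `Ξ_S^ω` is computed by suprema: at limit numbers it preserves
simplicity-suprema, and at successors
`Ξ_S^ω(u ∔ σ) = sup_⊑ { Ξ_S^n(Ξ_S^ω(u) ∔ σ) : n ∈ ℕ }`. -/
theorem fixed_points_closed_substructure_and_parametrisation (S : Set SSurreal)
    (Ξ : SSurreal → SSurreal) (hS : IsSubstructurePar S Ξ)
    (hcl : IsClosedPar Ξ) :
    ∃ Ξω : SSurreal → SSurreal,
      IsSubstructurePar {z : SSurreal | Ξ z = z} Ξω ∧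
      IsClosedPar Ξω ∧
      (∀ z : SSurreal, Order.IsSuccLimit z.length →
        IsSimpSup (Ξω '' {w | slt w z}) (Ξω z)) ∧
      (∀ u σ : SSurreal, σ = SSurreal.one ∨ σ = negOne →
        IsSimpSup (Set.range fun n : ℕ => Ξ^[n] (concat (Ξω u) σ))
          (Ξω (concat u σ))) := by
  obtain ⟨-, -, hlt_iff, hslt_iff⟩ := hS
  have hslt := fun z w => (hslt_iff z w).1
  have hlt := fun z w => (hlt_iff z w).1
  refine ⟨omegaPar Ξ, ⟨map_omegaPar hslt hlt hcl, fun _ hy => exists_omegaPar_eq hslt hlt hcl hy,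
      lt_iff_omegaPar_lt hslt hlt hcl, slt_iff_omegaPar_slt hslt hlt hcl⟩,
    isClosedPar_omegaPar hslt hlt hcl,
    fun _ hz => isSimpSup_omegaPar_of_isSuccLimit hslt hlt hcl hz, ?_⟩
  rintro u σ (rfl | rfl)
  · simpa only [ofSign_one] using isSimpSup_omegaPar_concat_ofSign hslt hlt hcl (.inl rfl) u
  · simpa only [ofSign_neg_one] using isSimpSup_omegaPar_concat_ofSign hslt hlt hcl (.inr rfl) u
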